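/- (Analytic index formula.) For every θ ∈ {1,…,S}, the denominator Δ(θ) := Σ_{z=θ}^S d^θ(z) − Σ_{z=θ+1}^S d^{θ+1}(z) is strictly positive, and the number ν(θ) := (Σ_{z=1}^S d^{θ+1}(z)·h(z) − Σ_{z=1}^S d^θ(z)·h(z)) / Δ(θ) − τ is the unique λ ∈ ℝ satisfying J(θ,λ) = J(θ+1,λ). -/

import Mathlib

open Finset

/-- β_{θ,ρ} = 1/(θ-1+1/ρ) -/
noncomputable def bet (ρ : ℝ) (θ : ℕ) : ℝ := 1 / ((θ : ℝ) - 1 + 1 / ρ)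

/-- Stationary distribution d^θ on {1,…,S} under the threshold policy θ;
for θ = S+1 it is the point mass at S. -/
noncomputable def dstat (S : ℕ) (ρ : ℝ) (θ : ℕ) (z : ℕ) : ℝ :=
  if θ = S + 1 then (if z = S then 1 else 0)
  else if z < θ then bet ρ θ
  else if z < S then (1 - ρ) ^ (z - θ) * bet ρ θ
  else (1 - ρ) ^ (S - θ) * bet ρ θ / ρ

/-- Average cost J(θ,λ) = Σ_z d^θ(z)h(z) + (λ+τ)·Σ_{z=θ}^S d^θ(z). -/
noncomputable def Jcost (S : ℕ) (ρ : ℝ) (h : ℕ → ℝ) (τ : ℝ) (θ : ℕ) (lam : ℝ) : ℝ :=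
  (∑ z ∈ Finset.Icc 1 S, dstat S ρ θ z * h z)
    + (lam + τ) * ∑ z ∈ Finset.Icc θ S, dstat S ρ θ z

lemma bet_pos (ρ : ℝ) (hρ0 : 0 < ρ) (θ : ℕ) (hθ1 : 1 ≤ θ) : 0 < bet ρ θ := by
  have h1 : (1:ℝ) ≤ θ := by exact_mod_cast hθ1
  have h2 : 0 < 1/ρ := one_div_pos.mpr hρ0
  exact one_div_pos.mpr (by linarith)

lemma sum_tail (S : ℕ) (ρ : ℝ) (hρ0 : 0 < ρ) (θ : ℕ) (hθS : θ ≤ S) :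
    ∑ z ∈ Finset.Icc θ S, dstat S ρ θ z = bet ρ θ / ρ := by
  have hne : θ ≠ S + 1 := by omega
  have h1 : (1:ℝ) - ρ ≠ 1 := by intro hh; exact hρ0.ne' (by linarith)
  rw [← Finset.Ico_insert_right hθS, Finset.sum_insert (by simp)]
  have hdS : dstat S ρ θ S = (1-ρ)^(S-θ) * bet ρ θ / ρ := by
    unfold dstat
    rw [if_neg hne, if_neg (by omega), if_neg (by omega)]
  have hico : ∑ z ∈ Finset.Ico θ S, dstat S ρ θ z
      = ∑ k ∈ Finset.range (S - θ), (1-ρ)^k * bet ρ θ := by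
    rw [Finset.sum_Ico_eq_sum_range]
    apply Finset.sum_congr rfl
    intro k hk
    simp only [Finset.mem_range] at hk
    unfold dstat
    rw [if_neg hne, if_neg (by omega), if_pos (by omega)]
    have : θ + k - θ = k := by omega
    rw [this]
  rw [hico, hdS, ← Finset.sum_mul, geom_sum_eq h1]
  have hx : (1 - ρ) - 1 = -ρ := by ring
  rw [hx]
  field_simp
  ring

/-- Analytic index formula: the denominator Δ(θ) is positive and
ν(θ) is the unique λ with J(θ,λ) = J(θ+1,λ). -/
theorem analytic_index_formula
    (S : ℕ) (hS : 2 ≤ S) (ρ : ℝ) (hρ0 : 0 < ρ) (hρ1 : ρ ≤ 1)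
    (h : ℕ → ℝ) (τ : ℝ)
    (θ : ℕ) (hθ : θ ∈ Finset.Icc 1 S)
    (Δ : ℝ)
    (hΔ : Δ = (∑ z ∈ Finset.Icc θ S, dstat S ρ θ z)
              - ∑ z ∈ Finset.Icc (θ + 1) S, dstat S ρ (θ + 1) z)
    (ν : ℝ)
    (hν : ν = ((∑ z ∈ Finset.Icc 1 S, dstat S ρ (θ + 1) z * h z)
              - ∑ z ∈ Finset.Icc 1 S, dstat S ρ θ z * h z) / Δ - τ) :
    0 < Δ ∧
    ∀ lam : ℝ, Jcost S ρ h τ θ lam = Jcost S ρ h τ (θ + 1) lam ↔ lam = ν := by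

  rw [Finset.mem_Icc] at hθ
  obtain ⟨hθ1, hθS⟩ := hθ
  have hT : ∑ z ∈ Finset.Icc θ S, dstat S ρ θ z = bet ρ θ / ρ :=
    sum_tail S ρ hρ0 θ hθS
  have hΔpos : 0 < Δ := by
    rcases eq_or_lt_of_le hθS with hEq | hLt
    · have hempty : Finset.Icc (θ + 1) S = ∅ := Finset.Icc_eq_empty (by omega)
      rw [hΔ, hT, hempty, Finset.sum_empty, sub_zero]
      exact div_pos (bet_pos ρ hρ0 θ hθ1) hρ0
    · have hT' : ∑ z ∈ Finset.Icc (θ+1) S, dstat S ρ (θ+1) z = bet ρ (θ+1) / ρ :=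
        sum_tail S ρ hρ0 (θ+1) (by omega)
      have hapos : 0 < (θ:ℝ) - 1 + 1/ρ := by
        have h1 : (1:ℝ) ≤ θ := by exact_mod_cast hθ1
        have h2 : 0 < 1/ρ := one_div_pos.mpr hρ0
        linarith
      have hb : bet ρ (θ+1) < bet ρ θ := by
        unfold bet
        push_cast
        exact one_div_lt_one_div_of_lt hapos (by linarith)
      rw [hΔ, hT, hT']
      have : bet ρ (θ+1) / ρ < bet ρ θ / ρ := by gcongr
      linarith
  refine ⟨hΔpos, fun lam => ?_⟩
  have hΔ0 : Δ ≠ 0 := ne_of_gt hΔpos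
  set A := ∑ z ∈ Finset.Icc 1 S, dstat S ρ θ z * h z with hA
  set A' := ∑ z ∈ Finset.Icc 1 S, dstat S ρ (θ+1) z * h z with hA'
  set T := ∑ z ∈ Finset.Icc θ S, dstat S ρ θ z with hTd
  set T' := ∑ z ∈ Finset.Icc (θ+1) S, dstat S ρ (θ+1) z with hT'd
  have hJ : Jcost S ρ h τ θ lam = A + (lam + τ) * T := rfl
  have hJ' : Jcost S ρ h τ (θ+1) lam = A' + (lam + τ) * T' := rfl
  rw [hJ, hJ', hν]
  rw [eq_sub_iff_add_eq, eq_div_iff hΔ0, hΔ]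
  constructor
  · intro he
    nlinarith [he]
  · intro he
    nlinarith [he]
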